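/- arXiv:2510.00164 — 3 statements merged into one kernel-verified Lean document; each statement's English description precedes it below -/
import Mathlib

section
/- Let α be a type and h : α → α → α such that the uncurried map (x, y) ↦ h x y is injective on α × α. Fix a depth D : ℕ and direction bits dir : Fin D → Bool. Then the Merkle path fold is injective in the leaf value and the sibling values: for all c, c' : α and path, path' : Fin D → α, if pathFold h D c dir path = pathFold h D c' dir path', then c = c' and path = path'. In particular, for a fixed leaf position a Merkle inclusion proof determines the leaf value uniquely. -/
/-! Each step of the fold is an injective function of the pair (accumulator, sibling), the
direction bit only swapping the two arguments. So the final value determines the accumulator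
before the last step together with the last sibling, and induction on the depth recovers the
leaf and all siblings. -/

/-- The Merkle path fold: starting from `c`, for `k = 0, …, D-1` in order update
`tmp := h tmp (path k)` if `dir k` and `tmp := h (path k) tmp` otherwise. -/
def pathFold {α : Type*} (h : α → α → α) (D : ℕ) (c : α)
    (dir : Fin D → Bool) (path : Fin D → α) : α :=
  Fin.foldl D (fun tmp k => if dir k then h tmp (path k) else h (path k) tmp) c

open Function

theorem Fin.eq_and_eq_of_foldl_eq_foldl {α β : Type*} {n : ℕ} (g : Fin n → α → β → α)
    (hg : ∀ k, Injective (uncurry (g k))) {c c' : α} {x x' : Fin n → β}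
    (heq : Fin.foldl n (fun t k => g k t (x k)) c = Fin.foldl n (fun t k => g k t (x' k)) c') :
    c = c' ∧ x = x' := by
  induction n with
  | zero => exact ⟨by simpa only [Fin.foldl_zero] using heq, funext (·.elim0)⟩
  | succ n ih =>
    rw [Fin.foldl_succ_last, Fin.foldl_succ_last] at heq
    obtain ⟨hinit, hlast⟩ := Prod.mk.inj <|
      hg (Fin.last n) (a₁ := (_, _)) (a₂ := (_, _)) heq
    obtain ⟨hc, hx⟩ := ih (fun k => g k.castSucc) (fun k => hg k.castSucc)
      (x := fun k => x k.castSucc) (x' := fun k => x' k.castSucc) hinit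
    refine ⟨hc, funext fun k => ?_⟩
    induction k using Fin.lastCases with
    | last => exact hlast
    | cast i => exact congrFun hx i

theorem injective_uncurry_ite_swap {α β : Type*} {h : α → α → β}
    (hinj : Injective (uncurry h)) (b : Bool) :
    Injective (uncurry fun t s => if b then h t s else h s t) := by
  cases b
  · exact hinj.comp Prod.swap_injective
  · exact hinj

/-- if the uncurried hash is injective on `α × α`, then for fixed
depth `D` and direction bits `dir`, the Merkle path fold is injective in the
leaf value and the sibling values. -/
theorem pathFold_injective {α : Type*} (h : α → α → α)
    (hinj : Function.Injective fun p : α × α => h p.1 p.2)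
    (D : ℕ) (dir : Fin D → Bool)
    (c c' : α) (path path' : Fin D → α)
    (heq : pathFold h D c dir path = pathFold h D c' dir path') :
    c = c' ∧ path = path' :=
  Fin.eq_and_eq_of_foldl_eq_foldl (fun k t s => if dir k then h t s else h s t)
    (fun k => injective_uncurry_ite_swap hinj (dir k)) heq
end

section
/- Let α be a type, h : α → α → α, D : ℕ, f : Fin (2^D) → α a leaf assignment, and i : Fin (2^D) a leaf index. Define the direction bits dir : Fin D → Bool by dir k = true if and only if the k-th least-significant binary digit of i is 0 (i.e. ¬ Nat.testBit i k). Then there exists a sibling vector path : Fin D → α such that for every v : α, merkleRoot h D (Function.update f i v) = pathFold h D v dir path. In particular, taking v = f i, pathFold h D (f i) dir path = merkleRoot h D f, so every leaf of the tree admits a valid Merkle inclusion proof, and updating a single leaf changes the root only through the same fold with the same sibling vector. -/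
/-- The Merkle root of a full binary tree of depth `D` with leaves `f`,
computed with the two-argument hash `g`. -/
def merkleRoot {α : Type*} (g : α → α → α) : (D : ℕ) → (Fin (2 ^ D) → α) → α
  | 0, f => f 0
  | D + 1, f =>
      have h2 : 2 ^ (D + 1) = 2 ^ D + 2 ^ D := by rw [pow_succ]; omega
      g (merkleRoot g D fun i => f ⟨i.1, by have := i.2; omega⟩)
        (merkleRoot g D fun i => f ⟨2 ^ D + i.1, by have := i.2; omega⟩)

/-! Induction on the depth. Bit `D` of `i` says which half of a tree of depth `D + 1` holds
leaf `i`: the root of the other half is the last sibling of the path, and the lower `D` bits of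
`i` index the leaf inside its own half, where the inductive hypothesis applies. -/

def leftLeaf (D : ℕ) (j : Fin (2 ^ D)) : Fin (2 ^ (D + 1)) :=
  ⟨j, by rw [pow_succ]; omega⟩

def rightLeaf (D : ℕ) (j : Fin (2 ^ D)) : Fin (2 ^ (D + 1)) :=
  ⟨2 ^ D + j, by rw [pow_succ]; omega⟩

open Function

section

variable {α : Type*} (g : α → α → α) {D : ℕ}

theorem leftLeaf_injective : Injective (leftLeaf D) := fun j j' h => by
  simpa [Fin.ext_iff, leftLeaf] using h

theorem rightLeaf_injective : Injective (rightLeaf D) := fun j j' h => by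
  simpa [Fin.ext_iff, rightLeaf] using h

theorem leftLeaf_ne_rightLeaf (j j' : Fin (2 ^ D)) : leftLeaf D j ≠ rightLeaf D j' := by
  simp [Fin.ext_iff, leftLeaf, rightLeaf]; omega

theorem exists_eq_leftLeaf_or_rightLeaf (i : Fin (2 ^ (D + 1))) :
    (∃ j, i = leftLeaf D j) ∨ ∃ j, i = rightLeaf D j := by
  by_cases hi : (i : ℕ) < 2 ^ D
  · exact Or.inl ⟨⟨i, hi⟩, rfl⟩
  · have : (i : ℕ) < 2 ^ D + 2 ^ D := by rw [← two_mul, ← pow_succ']; exact i.2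
    exact Or.inr ⟨⟨i - 2 ^ D, by omega⟩, Fin.ext (by simp [rightLeaf]; omega)⟩

theorem testBit_leftLeaf (j : Fin (2 ^ D)) (k : ℕ) :
    Nat.testBit (leftLeaf D j) k = Nat.testBit j k :=
  rfl

theorem testBit_rightLeaf_self (j : Fin (2 ^ D)) : Nat.testBit (rightLeaf D j) D = true := by
  simp [rightLeaf, Nat.testBit_two_pow_add_eq, Nat.testBit_lt_two_pow j.2]

theorem testBit_rightLeaf_of_lt (j : Fin (2 ^ D)) {k : ℕ} (hk : k < D) :
    Nat.testBit (rightLeaf D j) k = Nat.testBit j k :=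
  Nat.testBit_two_pow_add_gt hk j

theorem merkleRoot_zero (f : Fin (2 ^ 0) → α) : merkleRoot g 0 f = f 0 := rfl

theorem merkleRoot_succ (f : Fin (2 ^ (D + 1)) → α) :
    merkleRoot g (D + 1) f =
      g (merkleRoot g D (f ∘ leftLeaf D)) (merkleRoot g D (f ∘ rightLeaf D)) :=
  rfl

theorem merkleRoot_update_leftLeaf (f : Fin (2 ^ (D + 1)) → α) (j : Fin (2 ^ D)) (v : α) :
    merkleRoot g (D + 1) (update f (leftLeaf D j) v) =
      g (merkleRoot g D (update (f ∘ leftLeaf D) j v)) (merkleRoot g D (f ∘ rightLeaf D)) := by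
  rw [merkleRoot_succ, update_comp_eq_of_injective _ leftLeaf_injective,
    update_comp_eq_of_forall_ne _ _ fun j' => (leftLeaf_ne_rightLeaf j j').symm]

theorem merkleRoot_update_rightLeaf (f : Fin (2 ^ (D + 1)) → α) (j : Fin (2 ^ D)) (v : α) :
    merkleRoot g (D + 1) (update f (rightLeaf D j) v) =
      g (merkleRoot g D (f ∘ leftLeaf D)) (merkleRoot g D (update (f ∘ rightLeaf D) j v)) := by
  rw [merkleRoot_succ, update_comp_eq_of_injective _ rightLeaf_injective,
    update_comp_eq_of_forall_ne _ _ fun j' => leftLeaf_ne_rightLeaf j' j]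

theorem pathFold_zero (c : α) (dir : Fin 0 → Bool) (path : Fin 0 → α) :
    pathFold g 0 c dir path = c := rfl

theorem pathFold_succ (c : α) (dir : Fin (D + 1) → Bool) (path : Fin (D + 1) → α) :
    pathFold g (D + 1) c dir path =
      if dir (Fin.last D)
      then g (pathFold g D c (dir ∘ Fin.castSucc) (path ∘ Fin.castSucc)) (path (Fin.last D))
      else g (path (Fin.last D)) (pathFold g D c (dir ∘ Fin.castSucc) (path ∘ Fin.castSucc)) :=
  Fin.foldl_succ_last ..

theorem pathFold_snoc (c : α) (dir : Fin (D + 1) → Bool) (path : Fin D → α) (s : α) :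
    pathFold g (D + 1) c dir (Fin.snoc path s) =
      if dir (Fin.last D)
      then g (pathFold g D c (dir ∘ Fin.castSucc) path) s
      else g s (pathFold g D c (dir ∘ Fin.castSucc) path) := by
  simp only [pathFold_succ, Fin.snoc_last, Fin.snoc_comp_castSucc]

end

/-- every leaf position `i` admits a sibling vector `path` such
that, with direction bits `dir k = true ↔ ¬ Nat.testBit i k`, the Merkle root
after updating leaf `i` to any value `v` equals the path fold starting from
`v` along `dir` and `path`; in particular (taking `v = f i`) every leaf has a
valid Merkle inclusion proof. -/
theorem merkleRoot_update_eq_pathFold {α : Type*} (h : α → α → α)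
    (D : ℕ) (f : Fin (2 ^ D) → α) (i : Fin (2 ^ D)) :
    ∃ path : Fin D → α,
      ∀ v : α,
        merkleRoot h D (Function.update f i v) =
          pathFold h D v (fun k => !(Nat.testBit i.1 k.1)) path := by
  induction D with
  | zero =>
    refine ⟨Fin.elim0, fun v => ?_⟩
    rw [Subsingleton.elim (α := Fin 1) i 0, merkleRoot_zero, pathFold_zero, update_self]
  | succ D ih =>
    rcases exists_eq_leftLeaf_or_rightLeaf i with ⟨j, rfl⟩ | ⟨j, rfl⟩
    · obtain ⟨path, hpath⟩ := ih (f ∘ leftLeaf D) j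
      refine ⟨Fin.snoc path (merkleRoot h D (f ∘ rightLeaf D)), fun v => ?_⟩
      rw [merkleRoot_update_leftLeaf, hpath, pathFold_snoc]
      simp [Function.comp_def, testBit_leftLeaf, Nat.testBit_lt_two_pow j.2]
    · obtain ⟨path, hpath⟩ := ih (f ∘ rightLeaf D) j
      refine ⟨Fin.snoc path (merkleRoot h D (f ∘ leftLeaf D)), fun v => ?_⟩
      rw [merkleRoot_update_rightLeaf, hpath, pathFold_snoc]
      simp [Function.comp_def, testBit_rightLeaf_self, testBit_rightLeaf_of_lt]
end

section
/- Let α be a type and h : α → α → α. For every depth D : ℕ and leaf assignments f, g : Fin (2^D) → α with f ≠ g, if merkleRoot h D f = merkleRoot h D g, then there exist pairs (x₁, y₁) ≠ (x₂, y₂) in α × α with h x₁ y₁ = h x₂ y₂. That is, any two distinct leaf assignments producing the same Merkle root yield an explicit collision of the underlying two-argument hash function. -/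
/-! If the hash is injective as a function of the pair of its arguments, then by induction on the
depth every Merkle root is injective in the leaves; contrapositively, two distinct leaf assignments
with the same root force two distinct argument pairs with the same hash. -/

namespace merkleRoot

variable {α : Type*} {D : ℕ}

def leftHalf (f : Fin (2 ^ (D + 1)) → α) : Fin (2 ^ D) → α :=
  fun i => f ⟨i.1, by have := i.2; omega⟩

def rightHalf (f : Fin (2 ^ (D + 1)) → α) : Fin (2 ^ D) → α :=
  fun i => f ⟨2 ^ D + i.1, by have := i.2; omega⟩

theorem eq_of_leftHalf_eq_of_rightHalf_eq {f f' : Fin (2 ^ (D + 1)) → α}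
    (hl : leftHalf f = leftHalf f') (hr : rightHalf f = rightHalf f') : f = f' := by
  funext i
  by_cases hi : i.1 < 2 ^ D
  · exact congrFun hl ⟨i.1, hi⟩
  · have hi' : i.1 - 2 ^ D < 2 ^ D := by have := i.2; omega
    have hidx : (⟨2 ^ D + (i.1 - 2 ^ D), by omega⟩ : Fin (2 ^ (D + 1))) = i := by
      ext; simp only; omega
    simpa only [rightHalf, hidx] using congrFun hr ⟨i.1 - 2 ^ D, hi'⟩

theorem succ (g : α → α → α) (f : Fin (2 ^ (D + 1)) → α) :
    merkleRoot g (D + 1) f = g (merkleRoot g D (leftHalf f)) (merkleRoot g D (rightHalf f)) :=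
  rfl

theorem injective {g : α → α → α} (hg : Function.Injective (Function.uncurry g)) :
    ∀ D, Function.Injective (merkleRoot g D)
  | 0, f, f', hroot => funext fun i => by rwa [Fin.fin_one_eq_zero i]
  | D + 1, f, f', hroot => by
    rw [succ, succ] at hroot
    obtain ⟨hl, hr⟩ := Prod.mk.inj (@hg (_, _) (_, _) hroot)
    exact eq_of_leftHalf_eq_of_rightHalf_eq (injective hg D hl) (injective hg D hr)

end merkleRoot

/-- two distinct leaf assignments with the same Merkle root yield
an explicit collision of the underlying two-argument hash function. -/
theorem merkleRoot_collision_extraction {α : Type*} (h : α → α → α)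
    (D : ℕ) (f g : Fin (2 ^ D) → α) (hfg : f ≠ g)
    (hroot : merkleRoot h D f = merkleRoot h D g) :
    ∃ x₁ y₁ x₂ y₂ : α, (x₁, y₁) ≠ (x₂, y₂) ∧ h x₁ y₁ = h x₂ y₂ := by
  by_contra hnone
  have hinj : Function.Injective (Function.uncurry h) := fun p q hpq =>
    not_not.mp fun hne => hnone ⟨p.1, p.2, q.1, q.2, hne, hpq⟩
  exact hfg (merkleRoot.injective hinj D hroot)
end
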